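/- Every p-fountain with n >= p coins and bottom row of length k >= p factors uniquely, by splitting at the first empty position of the next-to-bottom row, into a primitive (m+p-1, r+p-1) p-fountain and a p-fountain whose bottom row has length at least p-1; consequently f(n,k) = sum over 0 <= m <= n-p+1 and 0 <= r <= k-p+1 of g(m+p-1, r+p-1) f(n-m, k-r) for all n,k >= p. -/

import Mathlib

/-- A `p`-fountain: an arrangement of coins in rows. `rows i` is the set of positions of
coins in row `i` (row `0` is the bottom row). The bottom row consists of consecutive coins,
and each coin in a higher row has exactly `p+1` descendant coins immediately below it
(so two horizontally adjacent coins share exactly `p` common descendants). -/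
structure Fountain (p : ℕ) where
  rows : ℕ → Finset ℕ
  bottom_consecutive : rows 0 = Finset.range (rows 0).card
  supported : ∀ i j, j ∈ rows (i + 1) → ∀ d ≤ p, j + d ∈ rows i

namespace Fountain
variable {p : ℕ}

/-- The length of the bottom row. -/
def width (F : Fountain p) : ℕ := (F.rows 0).card

/-- The total number of coins. (For `p ≥ 1` all rows above row `width` are empty.) -/
def coins (F : Fountain p) : ℕ := ∑ i ∈ Finset.range (F.width + 1), (F.rows i).card

/-- A fountain is primitive if its next-to-bottom row is full, i.e. has `width - p` coins
(in particular this requires `width ≥ p`). -/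
def Primitive (F : Fountain p) : Prop :=
  p ≤ F.width ∧ F.rows 1 = Finset.range (F.width - p)

end Fountain

/-- `fcount p n k` = number of `(n,k)` `p`-fountains. -/
noncomputable def fcount (p n k : ℕ) : ℕ :=
  Set.ncard {F : Fountain p | F.coins = n ∧ F.width = k}

/-- `gcount p n k` = number of primitive `(n,k)` `p`-fountains. -/
noncomputable def gcount (p n k : ℕ) : ℕ :=
  Set.ncard {F : Fountain p | F.Primitive ∧ F.coins = n ∧ F.width = k}

/-- `hcount p n k` = number of non-primitive `(n,k)` `p`-fountains. -/
noncomputable def hcount (p n k : ℕ) : ℕ :=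
  Set.ncard {F : Fountain p | ¬ F.Primitive ∧ F.coins = n ∧ F.width = k}

/-- The generating function `F(q,z) = ∑ f(n,k) qⁿ zᵏ`, where `q = X 0`, `z = X 1`. -/
noncomputable def Fgf (p : ℕ) : MvPowerSeries (Fin 2) ℚ :=
  fun d => (fcount p (d 0) (d 1) : ℚ)

/-- The generating function `G(q,z) = ∑ g(n,k) qⁿ zᵏ` of primitive fountains. -/
noncomputable def Ggf (p : ℕ) : MvPowerSeries (Fin 2) ℚ :=
  fun d => (gcount p (d 0) (d 1) : ℚ)

/-- The generating function `H(q,z) = ∑ h(n,k) qⁿ zᵏ` of non-primitive fountains. -/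
noncomputable def Hgf (p : ℕ) : MvPowerSeries (Fin 2) ℚ :=
  fun d => (hcount p (d 0) (d 1) : ℚ)

/-- The substituted series `F(q, qz) = ∑ f(n,k) q^{n+k} z^k`. -/
noncomputable def Fqz (p : ℕ) : MvPowerSeries (Fin 2) ℚ :=
  fun d => if d 1 ≤ d 0 then (fcount p (d 0 - d 1) (d 1) : ℚ) else 0

/-!
Let `r` be the first gap of the next-to-bottom row of a fountain `F` of width `k ≥ p`. Every
coin of row `i + 1` at position `j` covers the positions `j, …, j + i p` of row `1`, which are
all occupied, so `r` is never among them: each coin lies either entirely to the left of `r`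
(`j + i p < r`) or entirely to its right (`r < j`). The coins on the left, over a bottom row
`0, …, r + p - 1`, form a primitive fountain; the coins on the right, shifted by `r + 1` over a
bottom row of length `k - r - 1 ≥ p - 1`, form an arbitrary one. The `p - 1` bottom coins
`r + 1, …, r + p - 1` belong to both pieces. Conversely, gluing a primitive fountain `G` and a
fountain `H` with `H` shifted by `G.width - p + 1` recovers `F`, because the first gap of the
glued fountain is `G.width - p`. Counting this bijection by coins and widths gives the
recursion for `f`.
-/

open Finset

theorem Set.ncard_eq_sum_ncard_fiberwise {α β : Type*} [DecidableEq β] {s : Set α}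
    (hs : s.Finite) {f : α → β} {t : Finset β} (H : s.MapsTo f t) :
    s.ncard = ∑ b ∈ t, {a ∈ s | f a = b}.ncard := by
  classical
  rw [Set.ncard_eq_toFinset_card s hs,
    card_eq_sum_card_fiberwise (by simpa only [Set.Finite.coe_toFinset] using H)]
  refine sum_congr rfl fun b _ => ?_
  rw [← Set.ncard_coe_finset]
  congr 1
  ext a
  simp

namespace Fountain

variable {p : ℕ}

@[ext]
theorem ext {F G : Fountain p} (h : F.rows = G.rows) : F = G := by
  cases F; cases G; congr

theorem rows_zero (F : Fountain p) : F.rows 0 = range F.width := F.bottom_consecutive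

theorem add_mem_rows_of_mem_rows_add (F : Fountain p) {i l j : ℕ} (hj : j ∈ F.rows (i + l))
    {d : ℕ} (hd : d ≤ i * p) : j + d ∈ F.rows l := by
  induction i generalizing j d with
  | zero => simpa [Nat.le_zero.mp (by simpa using hd)] using hj
  | succ i ih =>
    have hstep : j + min d p ∈ F.rows (i + l) :=
      F.supported (i + l) j (by rwa [Nat.add_right_comm]) _ (min_le_right d p)
    have hrest : d - min d p ≤ i * p := by rw [add_one_mul] at hd; omega
    simpa [add_assoc, Nat.add_sub_cancel' (min_le_left d p)] using ih hstep hrest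

theorem lt_width_of_mem_rows (F : Fountain p) {i j : ℕ} (hj : j ∈ F.rows i) : j < F.width := by
  simpa [rows_zero] using F.add_mem_rows_of_mem_rows_add (l := 0) hj (Nat.zero_le _)

theorem rows_eq_empty (hp : 1 ≤ p) (F : Fountain p) {i : ℕ} (hi : F.width ≤ i) :
    F.rows i = ∅ := by
  refine eq_empty_of_forall_notMem fun j hj => ?_
  have := F.lt_width_of_mem_rows (F.add_mem_rows_of_mem_rows_add (l := 0) hj le_rfl)
  nlinarith

theorem coins_eq_width_add_sum (hp : 1 ≤ p) (F : Fountain p) {N : ℕ} (hN : F.width ≤ N) :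
    F.coins = F.width + ∑ i ∈ range N, (F.rows (i + 1)).card := by
  rw [coins, sum_range_succ', add_comm]
  congr 1
  refine sum_subset (range_subset_range.2 hN) fun i _ hi => ?_
  rw [rows_eq_empty hp F (by simp only [mem_range] at hi; omega), card_empty]

theorem width_le_coins (F : Fountain p) : F.width ≤ F.coins :=
  single_le_sum (f := fun i => (F.rows i).card) (fun _ _ => Nat.zero_le _)
    (mem_range.2 F.width.succ_pos)

theorem finite_setOf_width_eq (hp : 1 ≤ p) (k : ℕ) :
    {F : Fountain p | F.width = k}.Finite := by
  have hinj : Set.InjOn (fun (F : Fountain p) (i : Fin k) => F.rows i)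
      {F : Fountain p | F.width = k} := by
    intro F hF G hG h
    ext1
    funext i
    by_cases hi : i < k
    · exact congrFun h ⟨i, hi⟩
    · rw [rows_eq_empty hp F (by simp_all), rows_eq_empty hp G (by simp_all)]
  refine Set.Finite.of_finite_image ((Set.Finite.pi'
    fun _ => (range k).powerset.finite_toSet).subset ?_) hinj
  rintro _ ⟨F, rfl, rfl⟩
  simpa [Set.subset_def] using fun i j hj => F.lt_width_of_mem_rows hj

def glue (G H : Fountain p) (hH : p - 1 ≤ H.width) : Fountain p where
  rows
    | 0 => range (G.width - p + 1 + H.width)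
    | i + 1 => G.rows (i + 1) ∪ (H.rows (i + 1)).map (addRightEmbedding (G.width - p + 1))
  bottom_consecutive := by simp
  supported i j hj d hd := by
    cases i with
    | zero =>
      simp only [mem_union, mem_map, addRightEmbedding_apply, mem_range] at hj ⊢
      rcases hj with hj | ⟨a, ha, rfl⟩
      · have := G.lt_width_of_mem_rows (G.supported 0 j hj p le_rfl)
        omega
      · have := H.lt_width_of_mem_rows (H.supported 0 a ha d hd)
        omega
    | succ i =>
      simp only [mem_union, mem_map, addRightEmbedding_apply] at hj ⊢
      rcases hj with hj | ⟨a, ha, rfl⟩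
      · exact Or.inl (G.supported (i + 1) j hj d hd)
      · exact Or.inr ⟨a + d, H.supported (i + 1) a ha d hd, by omega⟩

section glue

variable (G H : Fountain p) (hH : p - 1 ≤ H.width)

@[simp]
theorem glue_rows_succ (i : ℕ) : (G.glue H hH).rows (i + 1) =
    G.rows (i + 1) ∪ (H.rows (i + 1)).map (addRightEmbedding (G.width - p + 1)) :=
  rfl

@[simp]
theorem glue_width : (G.glue H hH).width = G.width - p + 1 + H.width := by
  simp [width, glue]

variable {G H}

theorem lt_of_mem_rows_succ_of_primitive (hG : G.Primitive) {i j : ℕ}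
    (hj : j ∈ G.rows (i + 1)) : j + i * p < G.width - p := by
  simpa [hG.2] using G.add_mem_rows_of_mem_rows_add hj le_rfl

theorem glue_coins (hp : 1 ≤ p) (hG : G.Primitive) :
    (G.glue H hH).coins + (p - 1) = G.coins + H.coins := by
  have hrows (i : ℕ) : ((G.glue H hH).rows (i + 1)).card =
      (G.rows (i + 1)).card + (H.rows (i + 1)).card := by
    rw [glue_rows_succ, card_union_of_disjoint, card_map]
    refine disjoint_left.2 fun j hjG hjH => ?_
    obtain ⟨a, -, rfl⟩ := mem_map.1 hjH
    have := lt_of_mem_rows_succ_of_primitive hG hjG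
    simp only [addRightEmbedding_apply] at this
    omega
  have hGw := hG.1
  rw [coins_eq_width_add_sum hp (G.glue H hH) le_rfl,
    coins_eq_width_add_sum hp G (N := (G.glue H hH).width) (by rw [glue_width]; omega),
    coins_eq_width_add_sum hp H (N := (G.glue H hH).width) (by rw [glue_width]; omega)]
  simp only [hrows, sum_add_distrib, glue_width]
  omega

end glue

noncomputable def firstGap (F : Fountain p) : ℕ :=
  Nat.find (Infinite.exists_notMem_finset (F.rows 1))

section firstGap

variable (F : Fountain p)

theorem firstGap_notMem : F.firstGap ∉ F.rows 1 :=
  Nat.find_spec (Infinite.exists_notMem_finset (F.rows 1))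

theorem mem_of_lt_firstGap {j : ℕ} (h : j < F.firstGap) : j ∈ F.rows 1 :=
  not_not.1 (Nat.find_min _ h)

variable {F}

theorem firstGap_eq {r : ℕ} (hr : r ∉ F.rows 1) (hlt : ∀ j < r, j ∈ F.rows 1) :
    F.firstGap = r :=
  (Nat.find_le hr).antisymm (not_lt.1 fun h => F.firstGap_notMem (hlt _ h))

theorem firstGap_add_le_width (hk : p ≤ F.width) : F.firstGap + p ≤ F.width := by
  have hgap : F.width - p ∉ F.rows 1 := fun h => by
    have := F.lt_width_of_mem_rows (F.supported 0 _ h p le_rfl)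
    omega
  have : F.firstGap ≤ F.width - p := Nat.find_le hgap
  omega

theorem add_mul_lt_firstGap_or_firstGap_lt {i j : ℕ} (hj : j ∈ F.rows (i + 1)) :
    j + i * p < F.firstGap ∨ F.firstGap < j := by
  by_contra! h
  have hmem := F.add_mem_rows_of_mem_rows_add hj (d := F.firstGap - j) (by omega)
  rw [Nat.add_sub_cancel' h.2] at hmem
  exact F.firstGap_notMem hmem

end firstGap

noncomputable def primitivePart (F : Fountain p) : Fountain p where
  rows
    | 0 => range (F.firstGap + p)
    | i + 1 => (F.rows (i + 1)).filter (· + i * p < F.firstGap)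
  bottom_consecutive := by simp
  supported i j hj d hd := by
    cases i with
    | zero =>
      simp only [mem_filter, mem_range] at hj ⊢
      omega
    | succ i =>
      simp only [mem_filter] at hj ⊢
      refine ⟨F.supported (i + 1) j hj.1 d hd, ?_⟩
      rw [add_one_mul] at hj
      omega

noncomputable def remainder (F : Fountain p) : Fountain p where
  rows
    | 0 => range (F.width - F.firstGap - 1)
    | i + 1 => (F.rows (i + 1)).preimage (· + (F.firstGap + 1)) (add_left_injective _).injOn
  bottom_consecutive := by simp
  supported i j hj d hd := by
    cases i with
    | zero =>
      simp only [mem_preimage, mem_range] at hj ⊢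
      have := F.lt_width_of_mem_rows (F.supported 0 _ hj d hd)
      omega
    | succ i =>
      simp only [mem_preimage] at hj ⊢
      simpa [Nat.add_right_comm] using F.supported (i + 1) _ hj d hd

section split

variable (F : Fountain p)

@[simp]
theorem mem_primitivePart_rows_succ {i j : ℕ} :
    j ∈ F.primitivePart.rows (i + 1) ↔ j ∈ F.rows (i + 1) ∧ j + i * p < F.firstGap := by
  simp [primitivePart]

@[simp]
theorem mem_remainder_rows_succ {i j : ℕ} :
    j ∈ F.remainder.rows (i + 1) ↔ j + (F.firstGap + 1) ∈ F.rows (i + 1) := by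
  simp [remainder]

@[simp]
theorem primitivePart_width : F.primitivePart.width = F.firstGap + p := by
  simp [width, primitivePart]

@[simp]
theorem remainder_width : F.remainder.width = F.width - F.firstGap - 1 := by
  simp [width, remainder]

theorem primitivePart_primitive : F.primitivePart.Primitive := by
  refine ⟨by simp, ?_⟩
  ext j
  simp only [primitivePart_width, Nat.add_sub_cancel, mem_primitivePart_rows_succ, zero_mul,
    add_zero, mem_range, and_iff_right_iff_imp]
  exact F.mem_of_lt_firstGap

variable {F}

theorem sub_one_le_remainder_width (hk : p ≤ F.width) : p - 1 ≤ F.remainder.width := by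
  have := firstGap_add_le_width hk
  simp only [remainder_width]
  omega

theorem width_primitivePart_add_width_remainder (hp : 1 ≤ p) (hk : p ≤ F.width) :
    F.primitivePart.width + F.remainder.width = F.width + (p - 1) := by
  have := firstGap_add_le_width hk
  simp only [primitivePart_width, remainder_width]
  omega

theorem glue_primitivePart_remainder (hp : 1 ≤ p) (hk : p ≤ F.width)
    (hH : p - 1 ≤ F.remainder.width) : F.primitivePart.glue F.remainder hH = F := by
  have := firstGap_add_le_width hk
  ext (_ | i) j
  · simp only [rows_zero, glue_width, primitivePart_width, remainder_width, mem_range]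
    omega
  · simp only [glue_rows_succ, primitivePart_width, mem_union, mem_primitivePart_rows_succ,
      mem_map, mem_remainder_rows_succ, addRightEmbedding_apply]
    rw [show F.firstGap + p - p + 1 = F.firstGap + 1 by omega]
    constructor
    · rintro (⟨hj, -⟩ | ⟨a, ha, rfl⟩)
      · exact hj
      · exact ha
    · intro hj
      refine (add_mul_lt_firstGap_or_firstGap_lt hj).imp (⟨hj, ·⟩) fun hlt =>
        ⟨j - (F.firstGap + 1), ?_, Nat.sub_add_cancel hlt⟩
      rwa [Nat.sub_add_cancel hlt]

theorem coins_primitivePart_add_coins_remainder (hp : 1 ≤ p) (hk : p ≤ F.width) :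
    F.primitivePart.coins + F.remainder.coins = F.coins + (p - 1) := by
  have := glue_coins (sub_one_le_remainder_width hk) hp F.primitivePart_primitive
  rwa [glue_primitivePart_remainder hp hk, eq_comm] at this

end split

section glueSplit

variable {G H : Fountain p} (hH : p - 1 ≤ H.width)

theorem firstGap_glue (hG : G.Primitive) : (G.glue H hH).firstGap = G.width - p := by
  have hrows : (G.glue H hH).rows 1 =
      range (G.width - p) ∪ (H.rows 1).map (addRightEmbedding (G.width - p + 1)) := by
    rw [← hG.2]
    exact glue_rows_succ G H hH 0
  refine firstGap_eq ?_ fun j hj => ?_ <;>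
    simp only [hrows, mem_union, mem_range, mem_map, addRightEmbedding_apply]
  · rintro (h | ⟨a, -, h⟩) <;> omega
  · exact Or.inl hj

theorem primitivePart_glue (hG : G.Primitive) : (G.glue H hH).primitivePart = G := by
  have := hG.1
  ext (_ | i) j
  · simp only [rows_zero, primitivePart_width, firstGap_glue hH hG, mem_range]
    omega
  · simp only [mem_primitivePart_rows_succ, glue_rows_succ, firstGap_glue hH hG, mem_union,
      mem_map, addRightEmbedding_apply]
    constructor
    · rintro ⟨hj | ⟨a, -, rfl⟩, hlt⟩
      · exact hj
      · omega
    · exact fun hj => ⟨Or.inl hj, lt_of_mem_rows_succ_of_primitive hG hj⟩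

theorem remainder_glue (hG : G.Primitive) : (G.glue H hH).remainder = H := by
  have := hG.1
  ext (_ | i) j
  · simp only [rows_zero, remainder_width, glue_width, firstGap_glue hH hG, mem_range]
    omega
  · simp only [mem_remainder_rows_succ, glue_rows_succ, firstGap_glue hH hG, mem_union,
      mem_map, addRightEmbedding_apply]
    constructor
    · rintro (hj | ⟨a, ha, hja⟩)
      · have := lt_of_mem_rows_succ_of_primitive hG hj
        omega
      · rwa [← Nat.add_right_cancel hja]
    · exact fun hj => Or.inr ⟨j, hj, rfl⟩

end glueSplit

noncomputable def split (F : Fountain p) : Fountain p × Fountain p :=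
  (F.primitivePart, F.remainder)

noncomputable def splitEquiv (hp : 1 ≤ p) :
    {F : Fountain p // p ≤ F.coins ∧ p ≤ F.width} ≃
      {GH : Fountain p × Fountain p // GH.1.Primitive ∧ p - 1 ≤ GH.2.width} where
  toFun F := ⟨F.1.split, F.1.primitivePart_primitive,
    sub_one_le_remainder_width F.2.2⟩
  invFun GH :=
    have hk : p ≤ (GH.1.1.glue GH.1.2 GH.2.2).width := by
      have := GH.2.1.1
      have := GH.2.2
      rw [glue_width]
      omega
    ⟨GH.1.1.glue GH.1.2 GH.2.2, hk.trans (width_le_coins _), hk⟩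
  left_inv F := Subtype.ext (glue_primitivePart_remainder hp F.2.2
    (sub_one_le_remainder_width F.2.2))
  right_inv GH := Subtype.ext (Prod.ext (primitivePart_glue GH.2.2 GH.2.1)
    (remainder_glue GH.2.2 GH.2.1))

theorem injOn_split (hp : 1 ≤ p) : Set.InjOn split {F : Fountain p | p ≤ F.width} :=
  fun F hF G hG h => congrArg Subtype.val <| (splitEquiv hp).injective
    (a₁ := ⟨F, hF.trans F.width_le_coins, hF⟩)
    (a₂ := ⟨G, hG.trans G.width_le_coins, hG⟩) (Subtype.ext h)

def factorizations (p n k : ℕ) : Set (Fountain p × Fountain p) :=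
  {GH | GH.1.Primitive ∧ p - 1 ≤ GH.2.width ∧
    GH.1.coins + GH.2.coins = n + p - 1 ∧ GH.1.width + GH.2.width = k + p - 1}

theorem image_split_setOf (hp : 1 ≤ p) {n k : ℕ} (hk : p ≤ k) :
    split '' {F : Fountain p | F.coins = n ∧ F.width = k} = factorizations p n k := by
  ext ⟨G, H⟩
  simp only [Set.mem_image, factorizations, Set.mem_ofPred_eq, split, Prod.mk.injEq]
  constructor
  · rintro ⟨F, ⟨rfl, rfl⟩, rfl, rfl⟩
    have := coins_primitivePart_add_coins_remainder hp hk
    have := width_primitivePart_add_width_remainder hp hk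
    exact ⟨F.primitivePart_primitive, sub_one_le_remainder_width hk, by omega, by omega⟩
  · rintro ⟨hG, hH, hc, hw⟩
    have := glue_coins hH hp hG
    have := hG.1
    exact ⟨G.glue H hH, ⟨by omega, by rw [glue_width]; omega⟩, primitivePart_glue hH hG,
      remainder_glue hH hG⟩

theorem fcount_eq_ncard_factorizations (hp : 1 ≤ p) {n k : ℕ} (hk : p ≤ k) :
    fcount p n k = (factorizations p n k).ncard := by
  have hsub : {F : Fountain p | F.coins = n ∧ F.width = k} ⊆ {F | p ≤ F.width} :=
    fun _ hF => hk.trans_eq hF.2.symm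
  rw [← image_split_setOf hp hk, ((injOn_split hp).mono hsub).ncard_image]
  rfl

theorem finite_factorizations (hp : 1 ≤ p) {n k : ℕ} (hk : p ≤ k) :
    (factorizations p n k).Finite :=
  image_split_setOf hp hk ▸ ((finite_setOf_width_eq hp k).subset fun _ hF => hF.2).image _

theorem mapsTo_factorizations (n k : ℕ) :
    Set.MapsTo (fun GH : Fountain p × Fountain p => (GH.1.coins - (p - 1), GH.1.width - (p - 1)))
      (factorizations p n k) ↑(range (n - p + 2) ×ˢ range (k - p + 2)) := by
  rintro ⟨G, H⟩ ⟨hG, hH, hc, hw⟩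
  dsimp only at hG hH hc hw
  have := hG.1
  have := H.width_le_coins
  simp only [coe_product, coe_range, Set.mem_prod, Set.mem_Iio]
  omega

theorem factorizations_fiber (hp : 1 ≤ p) {n k m r : ℕ} (hm : m + p ≤ n + 1)
    (hr : r + p ≤ k + 1) :
    {GH ∈ factorizations p n k | (GH.1.coins - (p - 1), GH.1.width - (p - 1)) = (m, r)} =
      {G : Fountain p | G.Primitive ∧ G.coins = m + p - 1 ∧ G.width = r + p - 1} ×ˢ
        {H : Fountain p | H.coins = n - m ∧ H.width = k - r} := by
  ext ⟨G, H⟩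
  simp only [factorizations, Set.mem_ofPred_eq, Prod.mk.injEq, Set.mem_prod]
  have := G.width_le_coins
  have := H.width_le_coins
  constructor
  · rintro ⟨⟨hG, hH, hc, hw⟩, rfl, rfl⟩
    have := hG.1
    exact ⟨⟨hG, by omega, by omega⟩, by omega, by omega⟩
  · rintro ⟨⟨hG, hGc, hGw⟩, hHc, hHw⟩
    have := hG.1
    exact ⟨⟨hG, by omega, by omega, by omega⟩, by omega, by omega⟩

end Fountain

open Fountain

/-- Every `p`-fountain with `n ≥ p` coins and bottom row of length `k ≥ p` factors
uniquely, by splitting at the first empty position of the next-to-bottom row, into a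
primitive piece and a piece whose bottom row has length at least `p-1`; in the splitting
`p-1` coins are doubled, so coins and widths add up to `n + p - 1` resp. `k + p - 1`.
Consequently `f(n,k) = ∑_{0≤m≤n-p+1} ∑_{0≤r≤k-p+1} g(m+p-1, r+p-1) f(n-m, k-r)`. -/
theorem fountain_factorization (p : ℕ) (hp : 1 ≤ p) :
    (∃ e : {F : Fountain p // p ≤ F.coins ∧ p ≤ F.width} ≃
        {GH : Fountain p × Fountain p // GH.1.Primitive ∧ p - 1 ≤ GH.2.width},
      ∀ F, F.1.coins + (p - 1) = (e F).1.1.coins + (e F).1.2.coins ∧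
           F.1.width + (p - 1) = (e F).1.1.width + (e F).1.2.width) ∧
    ∀ n k, p ≤ n → p ≤ k →
      fcount p n k =
        ∑ m ∈ Finset.range (n - p + 2), ∑ r ∈ Finset.range (k - p + 2),
          gcount p (m + p - 1) (r + p - 1) * fcount p (n - m) (k - r) := by
  refine ⟨⟨splitEquiv hp, fun F =>
    ⟨(coins_primitivePart_add_coins_remainder hp F.2.2).symm,
      (width_primitivePart_add_width_remainder hp F.2.2).symm⟩⟩, fun n k hn hk => ?_⟩
  rw [fcount_eq_ncard_factorizations hp hk, Set.ncard_eq_sum_ncard_fiberwise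
    (finite_factorizations hp hk) (mapsTo_factorizations n k), sum_product]
  refine sum_congr rfl fun m hm => sum_congr rfl fun r hr => ?_
  rw [mem_range] at hm hr
  rw [factorizations_fiber hp (by omega) (by omega), Set.ncard_prod]
  rfl
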